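/- arXiv:2404.05855 — 2 statements merged into one kernel-verified Lean document; each statement's English description precedes it below -/
import Mathlib

section
/- Let 𝒳 be a complex Banach space and T > 0. An evolution family on [0,T] is a two-parameter family of bounded linear operators U(t,s) : 𝒳 → 𝒳, defined for 0 ≤ s ≤ t ≤ T, such that U(t,r)U(r,s) = U(t,s) for all 0 ≤ s ≤ r ≤ t ≤ T, U(s,s) = I for all s ∈ [0,T], and (t,s) ↦ U(t,s)x is continuous for every x ∈ 𝒳; set M₀ = sup_{0 ≤ s ≤ t ≤ T} ‖U(t,s)‖ and assume M₀ < ∞. Let F : [0,T] × 𝒳 → 𝒳 be continuous with F(t,0) = 0 for all t, and assume that for every τ ∈ (0,T] and ρ > 0 there is L_{τ,ρ} ≥ 0, nondecreasing in both τ and ρ, with ‖F(t,x) − F(t,y)‖ ≤ L_{τ,ρ}‖x − y‖ for all t ∈ [0,τ] and all x, y with ‖x‖ ≤ ρ, ‖y‖ ≤ ρ. Let X₀ ∈ 𝒳, let 0 < t⁺ < T, and let X : [0, t⁺) → 𝒳 be a continuous function satisfying X(t) = U(t,0)X₀ + ∫₀ᵗ U(t,s)F(s, X(s)) ds for all t ∈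 [0, t⁺), and suppose that X cannot be extended to a mild solution on any interval [0, σ] with t⁺ ≤ σ ≤ T. Then ‖X(t)‖ → +∞ as t → t⁺ from the left. -/
/-!
If `‖X‖` does not tend to infinity, it stays below some `C` at times `t₀` arbitrarily close to
`t⁺`. Restarting the Duhamel formula at `t₀`,
`X t = U(t, t₀) X(t₀) + ∫_{t₀}^t U(t, s) F(s, X(s)) ds`,
a continuous-induction argument keeps `‖X‖ < M₀ C + 1` on `[t₀, t⁺)` once `t⁺ - t₀` is small
compared with the Lipschitz constant of `F` on that ball. Hence `F(·, X(·))` is bounded on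
`[0, t⁺)`, so by dominated convergence the right-hand side of the Duhamel formula is continuous
up to `t⁺`, and it is a mild solution on `[0, t⁺]` extending `X`.
-/

open MeasureTheory Filter Set Topology

theorem ContinuousWithinAt.clm_apply_of_norm_le {α 𝕜 E F : Type*} [TopologicalSpace α]
    [NontriviallyNormedField 𝕜] [NormedAddCommGroup E] [NormedSpace 𝕜 E]
    [NormedAddCommGroup F] [NormedSpace 𝕜 F] {G : α → E →L[𝕜] F} {y : α → E} {S : Set α}
    {a₀ : α} {M : ℝ} (hG : ContinuousWithinAt (fun a => G a (y a₀)) S a₀)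
    (hM : ∀ a ∈ S, ‖G a‖ ≤ M) (hy : ContinuousWithinAt y S a₀) :
    ContinuousWithinAt (fun a => G a (y a)) S a₀ := by
  have hdiff : Tendsto (fun a => G a (y a - y a₀)) (𝓝[S] a₀) (𝓝 0) := by
    refine squeeze_zero_norm' ?_ (by simpa using (hy.sub_const (y a₀)).norm.const_mul M)
    filter_upwards [self_mem_nhdsWithin] with a ha
    exact (G a).le_of_opNorm_le (hM a ha) _
  simpa only [ContinuousWithinAt, ← map_add, add_sub_cancel, add_zero] using hG.tendsto.add hdiff

theorem ContinuousOn.forall_lt_of_bootstrap {α β : Type*} [ConditionallyCompleteLinearOrder α]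
    [TopologicalSpace α] [OrderTopology α] [LinearOrder β] [TopologicalSpace β]
    [ClosedIciTopology β] {g : α → β} {a b : α} {ρ : β} (hg : ContinuousOn g (Ico a b))
    (hboot : ∀ t ∈ Ico a b, (∀ s ∈ Ico a t, g s < ρ) → g t < ρ) :
    ∀ t ∈ Ico a b, g t < ρ := by
  intro t ht
  by_contra hlt
  have hclosed : IsClosed (Icc a t ∩ g ⁻¹' Ici ρ) :=
    (hg.mono (Icc_subset_Ico_right ht.2)).preimage_isClosed_of_isClosed isClosed_Icc isClosed_Ici
  obtain ⟨t₁, ⟨⟨hat₁, ht₁t⟩, hρt₁⟩, hfirst⟩ :=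
    (isCompact_Icc.of_isClosed_subset hclosed inter_subset_left).exists_isLeast
      ⟨t, ⟨ht.1, le_rfl⟩, not_lt.1 hlt⟩
  refine (hboot t₁ ⟨hat₁, ht₁t.trans_lt ht.2⟩ fun s hs => ?_).not_ge hρt₁
  exact not_le.1 fun h => hs.2.not_ge (hfirst ⟨⟨hs.1, hs.2.le.trans ht₁t⟩, h⟩)

section Evolution

variable {𝕜 E : Type*} [NontriviallyNormedField 𝕜] [NormedAddCommGroup E] [NormedSpace 𝕜 E]
  {U : ℝ → ℝ → E →L[𝕜] E} {T M : ℝ}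

theorem continuousOn_evolution_apply_fst
    (hUcont : ∀ x : E, ContinuousOn (fun p : ℝ × ℝ => U p.1 p.2 x)
      {p : ℝ × ℝ | 0 ≤ p.2 ∧ p.2 ≤ p.1 ∧ p.1 ≤ T}) {s : ℝ} (hs : 0 ≤ s) (x : E) :
    ContinuousOn (fun t => U t s x) (Icc s T) :=
  (hUcont x).comp (continuous_id.prodMk continuous_const).continuousOn
    fun _ ht => ⟨hs, ht.1, ht.2⟩

theorem continuousOn_evolution_apply_snd
    (hUcont : ∀ x : E, ContinuousOn (fun p : ℝ × ℝ => U p.1 p.2 x)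
      {p : ℝ × ℝ | 0 ≤ p.2 ∧ p.2 ≤ p.1 ∧ p.1 ≤ T})
    (hM : ∀ s t : ℝ, 0 ≤ s → s ≤ t → t ≤ T → ‖U t s‖ ≤ M) {t : ℝ} (ht : t ≤ T) {y : ℝ → E}
    {A : Set ℝ} (hA : A ⊆ Icc 0 t) (hy : ContinuousOn y A) :
    ContinuousOn (fun s => U t s (y s)) A := fun s hs =>
  have hUt : ContinuousOn (fun r => U t r (y s)) A :=
    (hUcont (y s)).comp (continuous_const.prodMk continuous_id).continuousOn
      fun _ hr => ⟨(hA hr).1, (hA hr).2, ht⟩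
  (hUt s hs).clm_apply_of_norm_le (fun r hr => hM r t (hA hr).1 (hA hr).2 ht) (hy s hs)

theorem intervalIntegrable_evolution_apply
    (hUcont : ∀ x : E, ContinuousOn (fun p : ℝ × ℝ => U p.1 p.2 x)
      {p : ℝ × ℝ | 0 ≤ p.2 ∧ p.2 ≤ p.1 ∧ p.1 ≤ T})
    (hM : ∀ s t : ℝ, 0 ≤ s → s ≤ t → t ≤ T → ‖U t s‖ ≤ M) {t : ℝ} (ht₀ : 0 ≤ t) (ht : t ≤ T)
    {y : ℝ → E} (hy : ContinuousOn y (Icc 0 t)) :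
    IntervalIntegrable (fun s => U t s (y s)) volume 0 t :=
  (continuousOn_evolution_apply_snd hUcont hM ht subset_rfl hy).intervalIntegrable_of_Icc ht₀

theorem aestronglyMeasurable_indicator_evolution_apply
    (hUcont : ∀ x : E, ContinuousOn (fun p : ℝ × ℝ => U p.1 p.2 x)
      {p : ℝ × ℝ | 0 ≤ p.2 ∧ p.2 ≤ p.1 ∧ p.1 ≤ T})
    (hM : ∀ s t : ℝ, 0 ≤ s → s ≤ t → t ≤ T → ‖U t s‖ ≤ M) {τ t : ℝ} (hτ : τ ≤ T)
    (ht : t ∈ Icc 0 τ) {g : ℝ → E} (hg : ContinuousOn g (Ico 0 τ)) :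
    AEStronglyMeasurable ((Iic t).indicator fun s => U t s (g s)) (volume.restrict (Ioc 0 τ)) := by
  rw [aestronglyMeasurable_indicator_iff measurableSet_Iic,
    Measure.restrict_restrict measurableSet_Iic, Iic_inter_Ioc_of_le ht.2,
    ← Measure.restrict_congr_set Ioo_ae_eq_Ioc]
  exact (continuousOn_evolution_apply_snd hUcont hM (ht.2.trans hτ) Ioo_subset_Icc_self
    (hg.mono (Ioo_subset_Ico_self.trans (Ico_subset_Ico_right ht.2)))).aestronglyMeasurable
    measurableSet_Ioo

theorem continuousWithinAt_indicator_evolution_apply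
    (hUcont : ∀ x : E, ContinuousOn (fun p : ℝ × ℝ => U p.1 p.2 x)
      {p : ℝ × ℝ | 0 ≤ p.2 ∧ p.2 ≤ p.1 ∧ p.1 ≤ T})
    {τ t₀ s : ℝ} (hτ : τ ≤ T) (ht₀ : t₀ ≤ τ) (hs : 0 ≤ s) (hst₀ : s ≠ t₀) (g : ℝ → E) :
    ContinuousWithinAt (fun t => (Iic t).indicator (fun r => U t r (g r)) s) (Icc 0 τ) t₀ := by
  rcases lt_or_gt_of_ne hst₀ with h | h
  · have hnear : Ioi s ∈ 𝓝[Icc 0 τ] t₀ := mem_nhdsWithin_of_mem_nhds (Ioi_mem_nhds h)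
    have hUs := continuousOn_evolution_apply_fst hUcont hs (g s) t₀ ⟨h.le, ht₀.trans hτ⟩
    refine (hUs.mono_of_mem_nhdsWithin ?_).congr_of_eventuallyEq ?_
      (indicator_of_mem (mem_Iic.2 h.le) _)
    · filter_upwards [hnear, self_mem_nhdsWithin] with t hst ht using ⟨hst.le, ht.2.trans hτ⟩
    · filter_upwards [hnear] with t hst using indicator_of_mem (mem_Iic.2 hst.le) _
  · refine continuousWithinAt_const.congr_of_eventuallyEq ?_
      (indicator_of_notMem (notMem_Iic.2 h) _)
    filter_upwards [mem_nhdsWithin_of_mem_nhds (Iio_mem_nhds h)] with t hts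
      using indicator_of_notMem (notMem_Iic.2 hts) _

end Evolution

section Duhamel

variable {𝕜 E : Type*} [RCLike 𝕜] [NormedAddCommGroup E] [NormedSpace 𝕜 E] [NormedSpace ℝ E]
  {U : ℝ → ℝ → E →L[𝕜] E} {T M : ℝ}

noncomputable def duhamel (U : ℝ → ℝ → E →L[𝕜] E) (x : E) (g : ℝ → E) (t : ℝ) : E :=
  U t 0 x + ∫ s in (0 : ℝ)..t, U t s (g s)

theorem duhamel_eq_apply_add_integral [CompleteSpace E]
    (hUcomp : ∀ s r t : ℝ, 0 ≤ s → s ≤ r → r ≤ t → t ≤ T → (U t r).comp (U r s) = U t s)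
    {x : E} {g : ℝ → E} {t₀ t₁ : ℝ} (h₀ : 0 ≤ t₀) (h₀₁ : t₀ ≤ t₁) (h₁ : t₁ ≤ T)
    (hi₀ : IntervalIntegrable (fun s => U t₀ s (g s)) volume 0 t₀)
    (hi₁ : IntervalIntegrable (fun s => U t₁ s (g s)) volume 0 t₁) :
    duhamel U x g t₁ = U t₁ t₀ (duhamel U x g t₀) + ∫ s in t₀..t₁, U t₁ s (g s) := by
  have hcomp : ∀ s ∈ Icc 0 t₀, ∀ y, U t₁ t₀ (U t₀ s y) = U t₁ s y := fun s hs y => by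
    rw [← hUcomp s t₀ t₁ hs.1 hs.2 h₀₁ h₁]; rfl
  have hpast : ∫ s in (0 : ℝ)..t₀, U t₁ t₀ (U t₀ s (g s)) = ∫ s in (0 : ℝ)..t₀, U t₁ s (g s) :=
    intervalIntegral.integral_congr fun s hs => hcomp s (uIcc_of_le h₀ ▸ hs) (g s)
  rw [duhamel, duhamel, map_add, hcomp 0 ⟨le_rfl, h₀⟩, ← (U t₁ t₀).intervalIntegral_comp_comm hi₀,
    hpast, add_assoc, intervalIntegral.integral_add_adjacent_intervals
      (hi₁.mono_set (uIcc_subset_uIcc_left (mem_uIcc_of_le h₀ h₀₁)))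
      (hi₁.mono_set (uIcc_subset_uIcc_right (mem_uIcc_of_le h₀ h₀₁)))]

theorem continuousOn_duhamel
    (hUcont : ∀ x : E, ContinuousOn (fun p : ℝ × ℝ => U p.1 p.2 x)
      {p : ℝ × ℝ | 0 ≤ p.2 ∧ p.2 ≤ p.1 ∧ p.1 ≤ T})
    (hM : ∀ s t : ℝ, 0 ≤ s → s ≤ t → t ≤ T → ‖U t s‖ ≤ M) {τ K : ℝ} (hτ : τ ≤ T) {x : E}
    {g : ℝ → E} (hg : ContinuousOn g (Ico 0 τ)) (hK : ∀ s ∈ Ico 0 τ, ‖g s‖ ≤ K) :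
    ContinuousOn (duhamel U x g) (Icc 0 τ) := by
  refine ((continuousOn_evolution_apply_fst hUcont le_rfl x).mono
    (Icc_subset_Icc_right hτ)).add ?_
  refine ContinuousOn.congr (f := fun t => ∫ s in (0 : ℝ)..τ,
    (Iic t).indicator (fun s => U t s (g s)) s) ?_
    fun t ht => (intervalIntegral.integral_indicator ht).symm
  intro t₀ ht₀
  have hτ₀ : 0 ≤ τ := ht₀.1.trans ht₀.2
  refine intervalIntegral.continuousWithinAt_of_dominated_interval (bound := fun _ => M * K)
    ?_ ?_ intervalIntegrable_const ?_
  · filter_upwards [self_mem_nhdsWithin] with t ht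
    rw [uIoc_of_le hτ₀]
    exact aestronglyMeasurable_indicator_evolution_apply hUcont hM hτ ht hg
  · filter_upwards [self_mem_nhdsWithin] with t ht
    filter_upwards [compl_mem_ae_iff.2 (measure_singleton τ)] with s hsτ hs
    rw [uIoc_of_le hτ₀] at hs
    have hsI : s ∈ Ico 0 τ := ⟨hs.1.le, lt_of_le_of_ne hs.2 hsτ⟩
    by_cases hst : s ≤ t
    · rw [indicator_of_mem (mem_Iic.2 hst)]
      exact (U t s).le_of_opNorm_le_of_le (hM s t hsI.1 hst (ht.2.trans hτ)) (hK s hsI)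
    · rw [indicator_of_notMem (notMem_Iic.2 (not_le.1 hst)), norm_zero]
      exact mul_nonneg ((norm_nonneg _).trans (hM s s hsI.1 le_rfl (hsI.2.le.trans hτ)))
        ((norm_nonneg _).trans (hK s hsI))
  · filter_upwards [compl_mem_ae_iff.2 (measure_singleton t₀)] with s hst₀ hs
    rw [uIoc_of_le hτ₀] at hs
    exact continuousWithinAt_indicator_evolution_apply hUcont hτ ht₀.2 hs.1.le hst₀ g

def IsMildSolutionOn (U : ℝ → ℝ → E →L[𝕜] E) (F : ℝ → E → E) (x : E) (X : ℝ → E)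
    (S : Set ℝ) : Prop :=
  ContinuousOn X S ∧ ∀ t ∈ S, X t = duhamel U x (fun s => F s (X s)) t

namespace IsMildSolutionOn

variable {F : ℝ → E → E} {x : E} {X : ℝ → E} {τ : ℝ}

theorem norm_lt_of_small_time [CompleteSpace E]
    (hUcomp : ∀ s r t : ℝ, 0 ≤ s → s ≤ r → r ≤ t → t ≤ T → (U t r).comp (U r s) = U t s)
    (hM : ∀ s t : ℝ, 0 ≤ s → s ≤ t → t ≤ T → ‖U t s‖ ≤ M)
    (hX : IsMildSolutionOn U F x X (Ico 0 τ)) (hτ : τ ≤ T)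
    (hint : ∀ t ∈ Ico 0 τ, IntervalIntegrable (fun s => U t s (F s (X s))) volume 0 t)
    {ρ K t₀ : ℝ} (hF : ∀ s ∈ Ico 0 τ, ∀ y, ‖y‖ ≤ ρ → ‖F s y‖ ≤ K) (hK : 0 ≤ K)
    (ht₀ : t₀ ∈ Ico 0 τ) (hsmall : M * ‖X t₀‖ + M * K * (τ - t₀) < ρ) :
    ∀ t ∈ Ico t₀ τ, ‖X t‖ < ρ := by
  have hM0 : 0 ≤ M := (norm_nonneg _).trans (hM t₀ t₀ ht₀.1 le_rfl (ht₀.2.le.trans hτ))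
  refine (hX.1.mono (Ico_subset_Ico_left ht₀.1)).norm.forall_lt_of_bootstrap
    fun t ht hbound => ?_
  have htI : t ∈ Ico 0 τ := ⟨ht₀.1.trans ht.1, ht.2⟩
  have hrestart : X t = U t t₀ (X t₀) + ∫ s in t₀..t, U t s (F s (X s)) := by
    rw [hX.2 t htI, hX.2 t₀ ht₀]
    exact duhamel_eq_apply_add_integral hUcomp ht₀.1 ht.1 (ht.2.le.trans hτ) (hint t₀ ht₀)
      (hint t htI)
  have hdrift : ‖∫ s in t₀..t, U t s (F s (X s))‖ ≤ M * K * (t - t₀) := by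
    rw [← abs_of_nonneg (sub_nonneg.2 ht.1)]
    refine intervalIntegral.norm_integral_le_of_norm_le_const_ae ?_
    filter_upwards [compl_mem_ae_iff.2 (measure_singleton t)] with s hst hs
    rw [uIoc_of_le ht.1] at hs
    exact (U t s).le_of_opNorm_le_of_le (hM s t (ht₀.1.trans hs.1.le) hs.2 (ht.2.le.trans hτ))
      (hF s ⟨ht₀.1.trans hs.1.le, hs.2.trans_lt ht.2⟩ _
        (hbound s ⟨hs.1.le, lt_of_le_of_ne hs.2 hst⟩).le)
  calc ‖X t‖ ≤ M * ‖X t₀‖ + M * K * (t - t₀) := by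
        rw [hrestart]
        exact (norm_add_le _ _).trans (add_le_add ((U t t₀).le_of_opNorm_le
          (hM t₀ t ht₀.1 ht.1 (ht.2.le.trans hτ)) _) hdrift)
    _ ≤ M * ‖X t₀‖ + M * K * (τ - t₀) := by
        gcongr
        exact ht.2.le
    _ < ρ := hsmall

theorem exists_bound_of_not_tendsto [CompleteSpace E]
    (hUcomp : ∀ s r t : ℝ, 0 ≤ s → s ≤ r → r ≤ t → t ≤ T → (U t r).comp (U r s) = U t s)
    (hM : ∀ s t : ℝ, 0 ≤ s → s ≤ t → t ≤ T → ‖U t s‖ ≤ M)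
    (hX : IsMildSolutionOn U F x X (Ico 0 τ)) (hτ₀ : 0 < τ) (hτ : τ ≤ T)
    (hint : ∀ t ∈ Ico 0 τ, IntervalIntegrable (fun s => U t s (F s (X s))) volume 0 t)
    (hF : ∀ ρ > 0, ∃ K, 0 ≤ K ∧ ∀ s ∈ Ico 0 τ, ∀ y, ‖y‖ ≤ ρ → ‖F s y‖ ≤ K)
    (hX_lim : ¬Tendsto (fun t => ‖X t‖) (𝓝[<] τ) atTop) :
    ∃ ρ > 0, ∀ s ∈ Ico 0 τ, ‖X s‖ ≤ ρ := by
  obtain ⟨C, hC⟩ : ∃ C, ∃ᶠ t in 𝓝[<] τ, ‖X t‖ < C := by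
    simpa only [tendsto_atTop, not_forall, not_eventually, not_le] using hX_lim
  have hC0 : 0 < C := let ⟨_, ht⟩ := hC.exists; (norm_nonneg _).trans_lt ht
  have hM0 : 0 ≤ M := (norm_nonneg _).trans (hM 0 0 le_rfl le_rfl (hτ₀.le.trans hτ))
  obtain ⟨K, hK0, hK⟩ := hF (M * C + 1) (by positivity)
  have hdrift : ∀ᶠ t in 𝓝[<] τ, M * K * (τ - t) < 1 := by
    have hcont : Continuous fun t : ℝ => M * K * (τ - t) := by fun_prop
    have hlim : Tendsto (fun t => M * K * (τ - t)) (𝓝[<] τ) (𝓝 (M * K * (τ - τ))) :=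
      (hcont.tendsto τ).mono_left nhdsWithin_le_nhds
    rw [sub_self, mul_zero] at hlim
    exact hlim.eventually_lt_const one_pos
  obtain ⟨t₀, hXt₀, hsmall, ht₀⟩ :=
    (hC.and_eventually (hdrift.and (Ioo_mem_nhdsLT hτ₀))).exists
  have hlate := hX.norm_lt_of_small_time hUcomp hM hτ hint hK hK0 ⟨ht₀.1.le, ht₀.2⟩
    (by nlinarith [mul_le_mul_of_nonneg_left hXt₀.le hM0])
  obtain ⟨B, hB⟩ := isCompact_Icc.exists_bound_of_continuousOn
    (hX.1.mono (Icc_subset_Ico_right ht₀.2))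
  refine ⟨max B (M * C + 1), by positivity, fun s hs => ?_⟩
  rcases le_total s t₀ with h | h
  · exact (hB s ⟨hs.1, h⟩).trans (le_max_left _ _)
  · exact (hlate s ⟨h, hs.2⟩).le.trans (le_max_right _ _)

theorem exists_extension
    (hUcont : ∀ x : E, ContinuousOn (fun p : ℝ × ℝ => U p.1 p.2 x)
      {p : ℝ × ℝ | 0 ≤ p.2 ∧ p.2 ≤ p.1 ∧ p.1 ≤ T})
    (hM : ∀ s t : ℝ, 0 ≤ s → s ≤ t → t ≤ T → ‖U t s‖ ≤ M)
    (hX : IsMildSolutionOn U F x X (Ico 0 τ)) (hτ : τ ≤ T)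
    (hF : ContinuousOn (fun s => F s (X s)) (Ico 0 τ)) {K : ℝ}
    (hK : ∀ s ∈ Ico 0 τ, ‖F s (X s)‖ ≤ K) :
    ∃ Z, IsMildSolutionOn U F x Z (Icc 0 τ) ∧ ∀ t ∈ Ico 0 τ, Z t = X t := by
  have hZX : ∀ t ∈ Ico 0 τ, duhamel U x (fun s => F s (X s)) t = X t :=
    fun t ht => (hX.2 t ht).symm
  refine ⟨_, ⟨continuousOn_duhamel hUcont hM hτ hF hK, fun t ht => ?_⟩, hZX⟩
  rw [duhamel, duhamel]
  congr 1
  refine intervalIntegral.integral_congr_ae ?_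
  filter_upwards [compl_mem_ae_iff.2 (measure_singleton τ)] with s hsτ hs
  rw [uIoc_of_le ht.1] at hs
  rw [hZX s ⟨hs.1.le, lt_of_le_of_ne (hs.2.trans ht.2) hsτ⟩]

end IsMildSolutionOn

end Duhamel

theorem mild_solution_blow_up_general {𝒳 : Type*} [NormedAddCommGroup 𝒳]
    [NormedSpace ℂ 𝒳] [CompleteSpace 𝒳]
    (T : ℝ)
    (U : ℝ → ℝ → 𝒳 →L[ℂ] 𝒳)
    (hUcomp : ∀ s r t : ℝ, 0 ≤ s → s ≤ r → r ≤ t → t ≤ T →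
      (U t r).comp (U r s) = U t s)
    (hUcont : ∀ x : 𝒳, ContinuousOn (fun p : ℝ × ℝ => U p.1 p.2 x)
      {p : ℝ × ℝ | 0 ≤ p.2 ∧ p.2 ≤ p.1 ∧ p.1 ≤ T})
    (M₀ : ℝ) (hM₀ : ∀ s t : ℝ, 0 ≤ s → s ≤ t → t ≤ T → ‖U t s‖ ≤ M₀)
    (F : ℝ → 𝒳 → 𝒳)
    (hF : ContinuousOn (fun p : ℝ × 𝒳 => F p.1 p.2) (Set.Icc 0 T ×ˢ Set.univ))
    (hF0 : ∀ t ∈ Set.Icc (0:ℝ) T, F t 0 = 0)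
    (L : ℝ → ℝ → ℝ)
    (hL0 : ∀ τ ρ : ℝ, 0 < τ → τ ≤ T → 0 < ρ → 0 ≤ L τ ρ)
    (hLip : ∀ τ ρ : ℝ, 0 < τ → τ ≤ T → 0 < ρ → ∀ t ∈ Set.Icc (0:ℝ) τ, ∀ x y : 𝒳,
      ‖x‖ ≤ ρ → ‖y‖ ≤ ρ → ‖F t x - F t y‖ ≤ L τ ρ * ‖x - y‖)
    (X₀ : 𝒳) (tplus : ℝ) (htplus0 : 0 < tplus) (htplusT : tplus < T)
    (X : ℝ → 𝒳) (hXc : ContinuousOn X (Set.Ico 0 tplus))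
    (hX : ∀ t ∈ Set.Ico (0:ℝ) tplus,
      X t = U t 0 X₀ + ∫ s in (0:ℝ)..t, U t s (F s (X s)))
    (hnoext : ¬ ∃ (σ : ℝ) (Z : ℝ → 𝒳), tplus ≤ σ ∧ σ ≤ T ∧
      ContinuousOn Z (Set.Icc 0 σ) ∧
      (∀ t ∈ Set.Icc (0:ℝ) σ,
        Z t = U t 0 X₀ + ∫ s in (0:ℝ)..t, U t s (F s (Z s))) ∧
      ∀ t ∈ Set.Ico (0:ℝ) tplus, Z t = X t) :
    Tendsto (fun t => ‖X t‖) (nhdsWithin tplus (Set.Iio tplus)) atTop := by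
  have hmild : IsMildSolutionOn U F X₀ X (Ico 0 tplus) := ⟨hXc, hX⟩
  have hFX : ContinuousOn (fun s => F s (X s)) (Ico 0 tplus) :=
    hF.comp (continuousOn_id.prodMk hXc) fun s hs => ⟨⟨hs.1, (hs.2.trans htplusT).le⟩, trivial⟩
  have hgrowth : ∀ ρ > 0, ∀ s ∈ Ico 0 tplus, ∀ y : 𝒳, ‖y‖ ≤ ρ → ‖F s y‖ ≤ L tplus ρ * ρ := by
    intro ρ hρ s hs y hy
    have hLip0 := hLip tplus ρ htplus0 htplusT.le hρ s (Ico_subset_Icc_self hs) y 0 hy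
      (by simpa using hρ.le)
    rw [hF0 s ⟨hs.1, (hs.2.trans htplusT).le⟩, sub_zero, sub_zero] at hLip0
    exact hLip0.trans (mul_le_mul_of_nonneg_left hy (hL0 _ _ htplus0 htplusT.le hρ))
  by_contra hblow
  obtain ⟨ρ, hρ, hbdd⟩ := hmild.exists_bound_of_not_tendsto hUcomp hM₀ htplus0 htplusT.le
    (fun t ht => intervalIntegrable_evolution_apply hUcont hM₀ ht.1 (ht.2.trans htplusT).le
      (hFX.mono (Icc_subset_Ico_right ht.2)))
    (fun ρ hρ => ⟨_, mul_nonneg (hL0 _ _ htplus0 htplusT.le hρ) hρ.le, hgrowth ρ hρ⟩) hblow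
  obtain ⟨Z, ⟨hZc, hZ⟩, hZX⟩ := hmild.exists_extension hUcont hM₀ htplusT.le hFX
    fun s hs => hgrowth ρ hρ s hs _ (hbdd s hs)
  exact hnoext ⟨tplus, Z, le_rfl, htplusT.le, hZc, hZ, hZX⟩

/-- Blow-up alternative: if a mild solution of the semilinear non-autonomous evolution
equation on `[0, t⁺)` with `t⁺ < T` cannot be extended to a mild solution on any
interval `[0, σ]` with `t⁺ ≤ σ ≤ T`, then its norm diverges as `t → t⁺⁻`. -/
theorem mild_solution_blow_up {𝒳 : Type*} [NormedAddCommGroup 𝒳]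
    [NormedSpace ℂ 𝒳] [CompleteSpace 𝒳]
    (T : ℝ) (hT : 0 < T)
    (U : ℝ → ℝ → 𝒳 →L[ℂ] 𝒳)
    (hUcomp : ∀ s r t : ℝ, 0 ≤ s → s ≤ r → r ≤ t → t ≤ T →
      (U t r).comp (U r s) = U t s)
    (hUid : ∀ s : ℝ, 0 ≤ s → s ≤ T → U s s = ContinuousLinearMap.id ℂ 𝒳)
    (hUcont : ∀ x : 𝒳, ContinuousOn (fun p : ℝ × ℝ => U p.1 p.2 x)
      {p : ℝ × ℝ | 0 ≤ p.2 ∧ p.2 ≤ p.1 ∧ p.1 ≤ T})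
    (M₀ : ℝ) (hM₀ : ∀ s t : ℝ, 0 ≤ s → s ≤ t → t ≤ T → ‖U t s‖ ≤ M₀)
    (F : ℝ → 𝒳 → 𝒳)
    (hF : ContinuousOn (fun p : ℝ × 𝒳 => F p.1 p.2) (Set.Icc 0 T ×ˢ Set.univ))
    (hF0 : ∀ t ∈ Set.Icc (0:ℝ) T, F t 0 = 0)
    (L : ℝ → ℝ → ℝ)
    (hL0 : ∀ τ ρ : ℝ, 0 < τ → τ ≤ T → 0 < ρ → 0 ≤ L τ ρ)
    (hLmono : ∀ τ₁ τ₂ ρ₁ ρ₂ : ℝ, 0 < τ₁ → τ₁ ≤ τ₂ → τ₂ ≤ T → 0 < ρ₁ → ρ₁ ≤ ρ₂ →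
      L τ₁ ρ₁ ≤ L τ₂ ρ₂)
    (hLip : ∀ τ ρ : ℝ, 0 < τ → τ ≤ T → 0 < ρ → ∀ t ∈ Set.Icc (0:ℝ) τ, ∀ x y : 𝒳,
      ‖x‖ ≤ ρ → ‖y‖ ≤ ρ → ‖F t x - F t y‖ ≤ L τ ρ * ‖x - y‖)
    (X₀ : 𝒳) (tplus : ℝ) (htplus0 : 0 < tplus) (htplusT : tplus < T)
    (X : ℝ → 𝒳) (hXc : ContinuousOn X (Set.Ico 0 tplus))
    (hX : ∀ t ∈ Set.Ico (0:ℝ) tplus,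
      X t = U t 0 X₀ + ∫ s in (0:ℝ)..t, U t s (F s (X s)))
    (hnoext : ¬ ∃ (σ : ℝ) (Z : ℝ → 𝒳), tplus ≤ σ ∧ σ ≤ T ∧
      ContinuousOn Z (Set.Icc 0 σ) ∧
      (∀ t ∈ Set.Icc (0:ℝ) σ,
        Z t = U t 0 X₀ + ∫ s in (0:ℝ)..t, U t s (F s (Z s))) ∧
      ∀ t ∈ Set.Ico (0:ℝ) tplus, Z t = X t) :
    Tendsto (fun t => ‖X t‖) (nhdsWithin tplus (Set.Iio tplus)) atTop :=
  mild_solution_blow_up_general T U hUcomp hUcont M₀ hM₀ F hF hF0 L hL0 hLip X₀ tplus htplus0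
    htplusT X hXc hX hnoext
end

section
/- Let 𝒳 be a complex Banach space and T > 0. An evolution family on [0,T] is a two-parameter family of bounded linear operators U(t,s) : 𝒳 → 𝒳, defined for 0 ≤ s ≤ t ≤ T, such that U(t,r)U(r,s) = U(t,s) for all 0 ≤ s ≤ r ≤ t ≤ T, U(s,s) = I for all s ∈ [0,T], and (t,s) ↦ U(t,s)x is continuous for every x ∈ 𝒳; set M₀ = sup_{0 ≤ s ≤ t ≤ T} ‖U(t,s)‖ and assume M₀ < ∞. Let F : [0,T] × 𝒳 → 𝒳 be continuous with F(t,0) = 0 for all t, and assume that for every τ ∈ (0,T] and ρ > 0 there is L_{τ,ρ} ≥ 0, nondecreasing in both τ and ρ, with ‖F(t,x) − F(t,y)‖ ≤ L_{τ,ρ}‖x − y‖ for all t ∈ [0,τ] and all x, y with ‖x‖ ≤ ρ, ‖y‖ ≤ ρ. Let X₀ ∈ 𝒳 and let X be the maximal mild solution with initial datum X₀, defined on [0,T] or on [0, t⁺(X₀)). Then for every t* ∈ (0, t⁺(X₀)) (with t⁺(X₀) = T in the first case) there exists a radius ρ* = ρ*(X₀, t*) > 0 such that every Y₀ in the closed ball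 of radius ρ* centered at X₀ admits a mild solution Y on [0, t*], and the map Y₀ ↦ Y from this closed ball to C⁰([0, t*], 𝒳) (with the supremum norm) is Lipschitz continuous. -/
open MeasureTheory Set Filter Real Metric
open scoped NNReal Topology

/-!
Let `R` bound `‖X‖` on `[0, t*]` and let `ℓ` be the Lipschitz constant of `F` on the ball of
radius `R + 1`, so that `F t` is `ℓ`-Lipschitz on the tube `‖x - X t‖ ≤ 1`. Grönwall's
inequality gives `‖Y t - Z t‖ ≤ M₀ ‖Y₀ - Z₀‖ exp (M₀ ℓ t)` for mild solutions inside the tube,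
and a continuity argument shows that a mild solution with `M₀ ‖Y₀ - X₀‖ exp (M₀ ℓ t*) < 1` never
leaves it.
For existence, compose `F t` with the radial retraction onto the tube: the new nonlinearity is
globally Lipschitz, so an iterate of the Picard map is a contraction on `C([0, t*], 𝒳)`, and its
fixed point stays in the tube, where the two nonlinearities agree.
-/

theorem forall_le_of_bootstrap {φ : ℝ → ℝ} {l τ a b : ℝ} (hφ : ContinuousOn φ (Icc l τ))
    (hab : a < b) (hl : φ l < b) (hstep : ∀ c ∈ Icc l τ, (∀ s ∈ Icc l c, φ s ≤ b) → φ c ≤ a) :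
    ∀ t ∈ Icc l τ, φ t ≤ a := by
  by_contra! ⟨t, ht, hat⟩
  have hexit : (Icc l τ ∩ φ ⁻¹' Ici b).Nonempty := by
    by_contra! hnone
    refine hat.not_ge (hstep t ht fun s hs => ?_)
    by_contra! hbs
    exact hnone.subset ⟨⟨hs.1, hs.2.trans ht.2⟩, hbs.le⟩
  have hcompact : IsCompact (Icc l τ ∩ φ ⁻¹' Ici b) :=
    isCompact_Icc.of_isClosed_subset (hφ.preimage_isClosed_of_isClosed isClosed_Icc isClosed_Ici)
      inter_subset_left
  -- At the first time `t₀` with `b ≤ φ t₀`, continuity from the left forces `φ t₀ ≤ a < b`.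
  obtain ⟨t₀, ⟨ht₀, hbt₀⟩, hfirst⟩ := hcompact.exists_isLeast hexit
  have hbelow : ∀ s ∈ Ico l t₀, φ s < b := fun s hs => by
    by_contra! hbs
    exact hs.2.not_ge (hfirst ⟨⟨hs.1, hs.2.le.trans ht₀.2⟩, hbs⟩)
  have hlt₀ : l < t₀ := ht₀.1.lt_of_ne (by rintro rfl; exact (hl.trans_le hbt₀).false)
  have hclosure : closure (Ico l t₀) = Icc l t₀ := closure_Ico hlt₀.ne
  have ht₀a : φ t₀ ≤ a :=
    le_on_closure (g := fun _ => a)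
      (fun s hs => hstep s ⟨hs.1, hs.2.le.trans ht₀.2⟩ fun u hu =>
        (hbelow u ⟨hu.1, hu.2.trans_lt hs.2⟩).le)
      (hφ.mono (hclosure ▸ Icc_subset_Icc_right ht₀.2)) continuousOn_const
      (hclosure ▸ right_mem_Icc.2 hlt₀.le)
  exact (hab.trans_le (hbt₀.trans ht₀a)).false

theorem add_mul_gronwallBound_zero (a b x : ℝ) :
    a + b * gronwallBound 0 b a x = a * exp (b * x) := by
  rcases eq_or_ne b 0 with rfl | hb
  · simp
  · rw [gronwallBound_of_K_ne_0 hb]; field_simp; ring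

theorem le_mul_exp_of_le_add_mul_integral {φ : ℝ → ℝ} {l τ a b : ℝ} (hb : 0 ≤ b)
    (hφ : ContinuousOn φ (Icc l τ)) (h : ∀ t ∈ Icc l τ, φ t ≤ a + b * ∫ s in l..t, φ s) :
    ∀ t ∈ Icc l τ, φ t ≤ a * exp (b * (t - l)) := by
  intro t ht
  have hlτ : l ≤ τ := ht.1.trans ht.2
  set ψ := IccExtend hlτ ((Icc l τ).domRestrict φ)
  have hψ : Continuous ψ := hφ.domRestrict.Icc_extend'
  have hψφ : EqOn ψ φ (Icc l τ) := fun s hs => IccExtend_of_mem hlτ _ hs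
  have hint : ∀ x ∈ Icc l τ, ∫ s in l..x, ψ s = ∫ s in l..x, φ s := fun x hx =>
    intervalIntegral.integral_congr fun s hs =>
      hψφ ⟨(uIcc_of_le hx.1 ▸ hs).1, (uIcc_of_le hx.1 ▸ hs).2.trans hx.2⟩
  have hderiv : ∀ x, HasDerivAt (fun x => ∫ s in l..x, ψ s) (ψ x) x := fun x =>
    (hψ.integral_hasStrictDerivAt l x).hasDerivAt
  have hgron := le_gronwallBound_of_liminf_deriv_right_le (δ := 0) (K := b) (ε := a)
    (fun x _ => (hderiv x).continuousAt.continuousWithinAt)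
    (fun x _ r hr => (hderiv x).hasDerivWithinAt.liminf_right_slope_le hr)
    (by simp) (fun x hx => by
      rw [hψφ (Ico_subset_Icc_self hx), hint x (Ico_subset_Icc_self hx)]
      linarith [h x (Ico_subset_Icc_self hx)]) t ht
  calc φ t ≤ a + b * ∫ s in l..t, φ s := h t ht
    _ ≤ a + b * gronwallBound 0 b a (t - l) := by
      rw [← hint t ht]; gcongr
    _ = a * exp (b * (t - l)) := add_mul_gronwallBound_zero a b _

theorem norm_iterate_sub_le_of_norm_sub_le_integral {E : Type*} [NormedAddCommGroup E]
    {τ c : ℝ} (hτ : 0 ≤ τ) (hc : 0 ≤ c) {Φ : C(Icc (0:ℝ) τ, E) → C(Icc (0:ℝ) τ, E)}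
    (hΦ : ∀ u v (t : Icc (0:ℝ) τ),
      ‖Φ u t - Φ v t‖ ≤ c * ∫ s in (0:ℝ)..t, ‖IccExtend hτ u s - IccExtend hτ v s‖)
    (n : ℕ) (u v : C(Icc (0:ℝ) τ, E)) (t : Icc (0:ℝ) τ) :
    ‖Φ^[n] u t - Φ^[n] v t‖ ≤ (c * t) ^ n / n.factorial * dist u v := by
  induction n generalizing t with
  | zero => simpa [dist_eq_norm] using ContinuousMap.dist_apply_le_dist (f := u) (g := v) t
  | succ n ih =>
    rw [Function.iterate_succ_apply', Function.iterate_succ_apply']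
    have hprev : ∀ s ∈ Icc (0:ℝ) t, ‖IccExtend hτ (Φ^[n] u) s - IccExtend hτ (Φ^[n] v) s‖
        ≤ (c * s) ^ n / n.factorial * dist u v := fun s hs => by
      have hs' : s ∈ Icc 0 τ := ⟨hs.1, hs.2.trans t.2.2⟩
      rw [IccExtend_of_mem hτ _ hs', IccExtend_of_mem hτ _ hs']
      exact ih ⟨s, hs'⟩
    calc ‖Φ (Φ^[n] u) t - Φ (Φ^[n] v) t‖
        ≤ c * ∫ s in (0:ℝ)..t, ‖IccExtend hτ (Φ^[n] u) s - IccExtend hτ (Φ^[n] v) s‖ := hΦ _ _ t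
      _ ≤ c * ∫ s in (0:ℝ)..t, (c * s) ^ n / n.factorial * dist u v := by
        gcongr
        exact intervalIntegral.integral_mono_on t.2.1
          (Continuous.intervalIntegrable (by fun_prop) _ _)
          (Continuous.intervalIntegrable (by fun_prop) _ _) hprev
      _ = (c * t) ^ (n + 1) / (n + 1).factorial * dist u v := by
        have hfac : ((n + 1).factorial : ℝ) = (n + 1) * n.factorial := by
          push_cast [Nat.factorial_succ]; ring
        simp only [mul_pow, mul_div_right_comm _ _ (n.factorial : ℝ), mul_comm _ (dist u v)]
        rw [intervalIntegral.integral_const_mul, intervalIntegral.integral_const_mul,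
          integral_pow, hfac]
        field_simp
        ring

theorem exists_isFixedPt_of_norm_sub_le_integral {E : Type*} [NormedAddCommGroup E]
    [CompleteSpace E] {τ c : ℝ} (hτ : 0 ≤ τ) (hc : 0 ≤ c)
    {Φ : C(Icc (0:ℝ) τ, E) → C(Icc (0:ℝ) τ, E)}
    (hΦ : ∀ u v (t : Icc (0:ℝ) τ),
      ‖Φ u t - Φ v t‖ ≤ c * ∫ s in (0:ℝ)..t, ‖IccExtend hτ u s - IccExtend hτ v s‖) :
    ∃ u, Function.IsFixedPt Φ u := by
  have hdist : ∀ n u v, dist (Φ^[n] u) (Φ^[n] v) ≤ (c * τ) ^ n / n.factorial * dist u v :=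
    fun n u v => (ContinuousMap.dist_le (by positivity)).2 fun t => by
      rw [dist_eq_norm]
      refine (norm_iterate_sub_le_of_norm_sub_le_integral hτ hc hΦ n u v t).trans ?_
      gcongr
      · exact mul_nonneg hc t.2.1
      · exact t.2.2
  obtain ⟨n, hn⟩ := ((FloorSemiring.tendsto_pow_div_factorial_atTop (c * τ)).eventually
    (gt_mem_nhds one_pos)).exists
  have hcontr : ContractingWith ⟨(c * τ) ^ n / n.factorial, by positivity⟩ Φ^[n] :=
    ⟨hn, LipschitzWith.of_dist_le_mul (hdist n)⟩
  exact ⟨_, hcontr.isFixedPt_fixedPoint_iterate⟩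

theorem ContinuousOn.comp_graph {α β γ : Type*} [TopologicalSpace α] [TopologicalSpace β]
    [TopologicalSpace γ] {G : α → β → γ} {s : Set α} {Y : α → β}
    (hG : ContinuousOn (Function.uncurry G) (s ×ˢ univ)) (hY : ContinuousOn Y s) :
    ContinuousOn (fun t => G t (Y t)) s :=
  hG.comp (continuousOn_id.prodMk hY) fun _ ht => ⟨ht, trivial⟩

theorem ContinuousLinearMap.continuousOn_apply_of_norm_le {𝕜 P E F : Type*}
    [NontriviallyNormedField 𝕜] [TopologicalSpace P] [NormedAddCommGroup E] [NormedSpace 𝕜 E]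
    [NormedAddCommGroup F] [NormedSpace 𝕜 F] {A : P → E →L[𝕜] F} {s : Set P} {C : ℝ}
    (hA : ∀ x, ContinuousOn (fun p => A p x) s) (hC : ∀ p ∈ s, ‖A p‖ ≤ C) :
    ContinuousOn (fun q : P × E => A q.1 q.2) (s ×ˢ univ) := by
  rintro ⟨p₀, x₀⟩ ⟨hp₀, -⟩
  have hsmall : Tendsto (fun q : P × E => A q.1 (q.2 - x₀)) (𝓝[s ×ˢ univ] (p₀, x₀)) (𝓝 0) := by
    refine squeeze_zero_norm' ?_ (a := fun q => C * ‖q.2 - x₀‖) ?_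
    · filter_upwards [self_mem_nhdsWithin] with q hq
      exact (A q.1).le_of_opNorm_le (hC q.1 hq.1) _
    · have : Continuous fun q : P × E => C * ‖q.2 - x₀‖ := by fun_prop
      simpa using (this.continuousWithinAt (s := s ×ˢ univ) (x := (p₀, x₀))).tendsto
  have hfixed : ContinuousWithinAt (fun q : P × E => A q.1 x₀) (s ×ˢ univ) (p₀, x₀) :=
    ContinuousWithinAt.comp (g := fun p => A p x₀) (hA x₀ p₀ hp₀) continuousWithinAt_fst
      mapsTo_fst_prod
  simpa [ContinuousWithinAt] using hsmall.add hfixed.tendsto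

section RadialRetraction

variable {E : Type*} [NormedAddCommGroup E] [NormedSpace ℝ E] {r : ℝ} {x y : E}

noncomputable def radialRetraction (r : ℝ) (x : E) : E :=
  if ‖x‖ ≤ r then x else (r / ‖x‖) • x

theorem radialRetraction_of_norm_le (h : ‖x‖ ≤ r) : radialRetraction r x = x := if_pos h

theorem radialRetraction_of_lt_norm (h : r < ‖x‖) : radialRetraction r x = (r / ‖x‖) • x :=
  if_neg h.not_ge

theorem norm_radialRetraction_le (hr : 0 ≤ r) (x : E) : ‖radialRetraction r x‖ ≤ r := by
  rcases le_or_gt ‖x‖ r with h | h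
  · rwa [radialRetraction_of_norm_le h]
  · rw [radialRetraction_of_lt_norm h, norm_smul, norm_div, norm_norm, Real.norm_of_nonneg hr,
      div_mul_cancel₀ _ (hr.trans_lt h).ne']

theorem norm_sub_radialRetraction_le_of_norm_le (hr : 0 ≤ r) (hx : ‖x‖ ≤ r) (y : E) :
    ‖x - radialRetraction r y‖ ≤ 2 * ‖x - y‖ := by
  rcases le_or_gt ‖y‖ r with hy | hy
  · rw [radialRetraction_of_norm_le hy]; linarith [norm_nonneg (x - y)]
  have hy0 : 0 < ‖y‖ := hr.trans_lt hy
  have hproj : ‖y - radialRetraction r y‖ = ‖y‖ - r := by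
    rw [radialRetraction_of_lt_norm hy,
      show y - (r / ‖y‖) • y = (1 - r / ‖y‖) • y by rw [sub_smul, one_smul], norm_smul,
      Real.norm_of_nonneg (sub_nonneg.2 ((div_le_one hy0).2 hy.le)), sub_mul, one_mul,
      div_mul_cancel₀ _ hy0.ne']
  calc ‖x - radialRetraction r y‖ ≤ ‖x - y‖ + ‖y - radialRetraction r y‖ :=
        norm_sub_le_norm_sub_add_norm_sub _ _ _
    _ ≤ ‖x - y‖ + ‖x - y‖ := by rw [hproj, norm_sub_rev x y]; linarith [norm_sub_norm_le y x]
    _ = 2 * ‖x - y‖ := by ring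

theorem norm_radialRetraction_sub_le_of_lt_norm (hr : 0 ≤ r) (hx : r < ‖x‖) (hy : r < ‖y‖) :
    ‖radialRetraction r x - radialRetraction r y‖ ≤ 2 * ‖x - y‖ := by
  have hx0 : 0 < ‖x‖ := hr.trans_lt hx
  have hy0 : 0 < ‖y‖ := hr.trans_lt hy
  have hc0 : 0 ≤ r / ‖x‖ := div_nonneg hr hx0.le
  have hc1 : r / ‖x‖ ≤ 1 := (div_le_one hx0).2 hx.le
  have hdiff : r / ‖x‖ - r / ‖y‖ = r / ‖x‖ * (‖y‖ - ‖x‖) / ‖y‖ := by field_simp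
  calc ‖radialRetraction r x - radialRetraction r y‖
      = ‖(r / ‖x‖) • (x - y) + (r / ‖x‖ - r / ‖y‖) • y‖ := by
        rw [radialRetraction_of_lt_norm hx, radialRetraction_of_lt_norm hy, smul_sub, sub_smul]
        abel_nf
    _ ≤ r / ‖x‖ * ‖x - y‖ + r / ‖x‖ * |‖y‖ - ‖x‖| := by
        refine (norm_add_le _ _).trans_eq ?_
        rw [norm_smul, norm_smul, Real.norm_of_nonneg hc0, Real.norm_eq_abs, hdiff, abs_div,
          abs_mul, abs_of_nonneg hc0, abs_of_pos hy0, div_mul_cancel₀ _ hy0.ne']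
    _ ≤ ‖x - y‖ + ‖x - y‖ := by
        gcongr
        · exact mul_le_of_le_one_left (norm_nonneg _) hc1
        · exact (mul_le_of_le_one_left (abs_nonneg _) hc1).trans
            ((abs_norm_sub_norm_le y x).trans_eq (norm_sub_rev y x))
    _ = 2 * ‖x - y‖ := by ring

theorem lipschitzWith_radialRetraction (hr : 0 ≤ r) :
    LipschitzWith 2 (radialRetraction (E := E) r) := by
  refine LipschitzWith.of_dist_le_mul fun x y => ?_
  simp only [dist_eq_norm, NNReal.coe_ofNat]
  rcases le_or_gt ‖x‖ r with hx | hx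
  · rw [radialRetraction_of_norm_le hx]
    exact norm_sub_radialRetraction_le_of_norm_le hr hx y
  rcases le_or_gt ‖y‖ r with hy | hy
  · rw [radialRetraction_of_norm_le hy, norm_sub_rev, norm_sub_rev x]
    exact norm_sub_radialRetraction_le_of_norm_le hr hy x
  exact norm_radialRetraction_sub_le_of_lt_norm hr hx hy

end RadialRetraction

section EvolutionFamily

variable {𝕜 𝒳 : Type*} [NontriviallyNormedField 𝕜] [NormedAddCommGroup 𝒳] [NormedSpace 𝕜 𝒳]

structure IsBoundedStronglyContinuous (U : ℝ → ℝ → 𝒳 →L[𝕜] 𝒳) (T M : ℝ) : Prop where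
  continuousOn_apply :
    ∀ x, ContinuousOn (fun p : ℝ × ℝ => U p.1 p.2 x) {p | 0 ≤ p.2 ∧ p.2 ≤ p.1 ∧ p.1 ≤ T}
  norm_le : ∀ s t, 0 ≤ s → s ≤ t → t ≤ T → ‖U t s‖ ≤ M

namespace IsBoundedStronglyContinuous

variable {U : ℝ → ℝ → 𝒳 →L[𝕜] 𝒳} {T M : ℝ}

theorem nonneg (hU : IsBoundedStronglyContinuous U T M) (hT : 0 ≤ T) : 0 ≤ M :=
  (norm_nonneg _).trans (hU.norm_le 0 0 le_rfl le_rfl hT)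

theorem continuousOn_uncurry (hU : IsBoundedStronglyContinuous U T M) :
    ContinuousOn (fun q : (ℝ × ℝ) × 𝒳 => U q.1.1 q.1.2 q.2)
      ({p | 0 ≤ p.2 ∧ p.2 ≤ p.1 ∧ p.1 ≤ T} ×ˢ univ) :=
  ContinuousLinearMap.continuousOn_apply_of_norm_le hU.continuousOn_apply
    fun p hp => hU.norm_le p.2 p.1 hp.1 hp.2.1 hp.2.2

theorem continuousOn_apply_comp (hU : IsBoundedStronglyContinuous U T M) {t : ℝ} (ht : t ≤ T)
    {w : ℝ → 𝒳} (hw : ContinuousOn w (Icc 0 t)) :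
    ContinuousOn (fun s => U t s (w s)) (Icc 0 t) :=
  hU.continuousOn_uncurry.comp (continuousOn_const.prodMk continuousOn_id |>.prodMk hw)
    fun _ hs => ⟨⟨hs.1, hs.2, ht⟩, trivial⟩

variable [NormedSpace ℝ 𝒳]

theorem continuousOn_integral (hU : IsBoundedStronglyContinuous U T M) {τ : ℝ} (hτ : τ ≤ T)
    {w : ℝ → 𝒳} (hw : ContinuousOn w (Icc 0 τ)) :
    ContinuousOn (fun t => ∫ s in (0:ℝ)..t, U t s (w s)) (Icc 0 τ) := by
  rcases lt_or_ge τ 0 with hτ0 | hτ0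
  · simp [Icc_eq_empty_of_lt hτ0]
  obtain ⟨proj, hproj, hprojIcc, hprojEq⟩ : ∃ proj : ℝ → ℝ,
      Continuous proj ∧ (∀ s, proj s ∈ Icc 0 τ) ∧ EqOn proj id (Icc 0 τ) :=
    ⟨fun s => projIcc 0 τ hτ0 s, continuous_subtype_val.comp continuous_projIcc,
      fun s => (projIcc 0 τ hτ0 s).2, fun s hs => congrArg Subtype.val (projIcc_of_mem hτ0 hs)⟩
  have hwproj : Continuous fun s => w (proj s) := hw.comp_continuous hproj hprojIcc
  -- `max` keeps the clamped pair in the triangle `s ≤ t` also for `s` outside `[0, t]`.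
  have hf : Continuous
      (Function.uncurry fun t s => U (max (proj t) (proj s)) (proj s) (w (proj s))) :=
    hU.continuousOn_uncurry.comp_continuous
      (f := fun p : ℝ × ℝ => ((max (proj p.1) (proj p.2), proj p.2), w (proj p.2)))
      ((by fun_prop : Continuous fun p : ℝ × ℝ => (max (proj p.1) (proj p.2), proj p.2)).prodMk
        (hwproj.comp continuous_snd))
      fun p => ⟨⟨(hprojIcc _).1, le_max_right _ _,
        max_le ((hprojIcc _).2.trans hτ) ((hprojIcc _).2.trans hτ)⟩, trivial⟩
  refine (intervalIntegral.continuous_parametric_intervalIntegral_of_continuous (a₀ := 0) hf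
    continuous_id).continuousOn.congr fun t ht => intervalIntegral.integral_congr fun s hs => ?_
  rw [uIcc_of_le ht.1] at hs
  simp only [hprojEq ht, hprojEq ⟨hs.1, hs.2.trans ht.2⟩, id, max_eq_left hs.2]

theorem norm_integral_sub_le (hU : IsBoundedStronglyContinuous U T M) {t : ℝ} (ht0 : 0 ≤ t)
    (ht : t ≤ T) {w₁ w₂ : ℝ → 𝒳} (hw₁ : ContinuousOn w₁ (Icc 0 t))
    (hw₂ : ContinuousOn w₂ (Icc 0 t)) {g : ℝ → ℝ} (hg : IntervalIntegrable g volume 0 t)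
    (hwg : ∀ s ∈ Icc 0 t, ‖w₁ s - w₂ s‖ ≤ g s) :
    ‖(∫ s in (0:ℝ)..t, U t s (w₁ s)) - ∫ s in (0:ℝ)..t, U t s (w₂ s)‖ ≤
      M * ∫ s in (0:ℝ)..t, g s := by
  have hint : ∀ {w : ℝ → 𝒳}, ContinuousOn w (Icc 0 t) →
      IntervalIntegrable (fun s => U t s (w s)) volume 0 t := fun hw =>
    (hU.continuousOn_apply_comp ht hw).intervalIntegrable_of_Icc ht0
  rw [← intervalIntegral.integral_sub (hint hw₁) (hint hw₂), ← intervalIntegral.integral_const_mul]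
  refine intervalIntegral.norm_integral_le_of_norm_le ht0 (ae_of_all _ fun s hs => ?_)
    (hg.const_mul M)
  rw [← map_sub]
  exact (U t s).le_of_opNorm_le (hU.norm_le s t hs.1.le hs.2 ht) _ |>.trans
    (mul_le_mul_of_nonneg_left (hwg s (Ioc_subset_Icc_self hs)) (hU.nonneg (ht0.trans ht)))

end IsBoundedStronglyContinuous

end EvolutionFamily

section MildSolution

variable {𝕜 𝒳 : Type*} [NontriviallyNormedField 𝕜] [NormedAddCommGroup 𝒳] [NormedSpace 𝕜 𝒳]
  [NormedSpace ℝ 𝒳]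

def IsMildSolution (U : ℝ → ℝ → 𝒳 →L[𝕜] 𝒳) (G : ℝ → 𝒳 → 𝒳) (τ : ℝ) (Y₀ : 𝒳)
    (Y : ℝ → 𝒳) : Prop :=
  ContinuousOn Y (Icc 0 τ) ∧ ∀ t ∈ Icc 0 τ, Y t = U t 0 Y₀ + ∫ s in (0:ℝ)..t, U t s (G s (Y s))

namespace IsMildSolution

variable {U : ℝ → ℝ → 𝒳 →L[𝕜] 𝒳} {G : ℝ → 𝒳 → 𝒳} {T M τ : ℝ} {X₀ Y₀ Z₀ : 𝒳} {X Y Z : ℝ → 𝒳}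

theorem mono (hY : IsMildSolution U G τ Y₀ Y) {σ : ℝ} (hσ : σ ≤ τ) :
    IsMildSolution U G σ Y₀ Y :=
  ⟨hY.1.mono (Icc_subset_Icc_right hσ), fun t ht => hY.2 t ⟨ht.1, ht.2.trans hσ⟩⟩

theorem apply_zero (hY : IsMildSolution U G τ Y₀ Y) (hτ : 0 ≤ τ) : Y 0 = U 0 0 Y₀ := by
  simpa using hY.2 0 ⟨le_rfl, hτ⟩

theorem congr {G' : ℝ → 𝒳 → 𝒳} (hY : IsMildSolution U G τ Y₀ Y)
    (hGG' : ∀ t ∈ Icc 0 τ, G t (Y t) = G' t (Y t)) : IsMildSolution U G' τ Y₀ Y := by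
  refine ⟨hY.1, fun t ht => (hY.2 t ht).trans ?_⟩
  congr 1
  refine intervalIntegral.integral_congr fun s hs => ?_
  rw [uIcc_of_le ht.1] at hs
  simp only [hGG' s ⟨hs.1, hs.2.trans ht.2⟩]

theorem norm_sub_le (hY : IsMildSolution U G τ Y₀ Y) (hZ : IsMildSolution U G τ Z₀ Z)
    (hU : IsBoundedStronglyContinuous U T M) (hτ : τ ≤ T)
    (hG : ContinuousOn (Function.uncurry G) (Icc 0 τ ×ˢ univ)) {b : ℝ} (hb : 0 ≤ b)
    (hYZ : ∀ s ∈ Icc 0 τ, ‖G s (Y s) - G s (Z s)‖ ≤ b * ‖Y s - Z s‖) :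
    ∀ t ∈ Icc 0 τ, ‖Y t - Z t‖ ≤ M * ‖Y₀ - Z₀‖ * exp (M * b * t) := by
  rcases lt_or_ge τ 0 with hτ0 | hτ0
  · simp [Icc_eq_empty_of_lt hτ0]
  have hM := hU.nonneg (hτ0.trans hτ)
  have hφ : ContinuousOn (fun t => ‖Y t - Z t‖) (Icc 0 τ) := (hY.1.sub hZ.1).norm
  suffices hint : ∀ t ∈ Icc 0 τ,
      ‖Y t - Z t‖ ≤ M * ‖Y₀ - Z₀‖ + M * b * ∫ s in (0:ℝ)..t, ‖Y s - Z s‖ by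
    simpa using le_mul_exp_of_le_add_mul_integral (mul_nonneg hM hb) hφ hint
  intro t ht
  have hsub : Icc 0 t ⊆ Icc 0 τ := Icc_subset_Icc_right ht.2
  have hdiff := hU.norm_integral_sub_le ht.1 (ht.2.trans hτ) ((hG.comp_graph hY.1).mono hsub)
    ((hG.comp_graph hZ.1).mono hsub) (((hφ.mono hsub).const_smul b).intervalIntegrable_of_Icc ht.1)
    fun s hs => hYZ s (hsub hs)
  calc ‖Y t - Z t‖
      = ‖U t 0 (Y₀ - Z₀) + ((∫ s in (0:ℝ)..t, U t s (G s (Y s)))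
          - ∫ s in (0:ℝ)..t, U t s (G s (Z s)))‖ := by
        rw [hY.2 t ht, hZ.2 t ht, map_sub]; abel_nf
    _ ≤ M * ‖Y₀ - Z₀‖ + M * ∫ s in (0:ℝ)..t, b * ‖Y s - Z s‖ :=
        norm_add_le_of_le ((U t 0).le_of_opNorm_le (hU.norm_le 0 t le_rfl ht.1 (ht.2.trans hτ)) _)
          hdiff
    _ = M * ‖Y₀ - Z₀‖ + M * b * ∫ s in (0:ℝ)..t, ‖Y s - Z s‖ := by
        rw [intervalIntegral.integral_const_mul, mul_assoc]

theorem norm_sub_le_of_lipschitzOnWith (hY : IsMildSolution U G τ Y₀ Y)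
    (hX : IsMildSolution U G τ X₀ X) (hU : IsBoundedStronglyContinuous U T M) (hτ : τ ≤ T)
    (hG : ContinuousOn (Function.uncurry G) (Icc 0 τ ×ˢ univ)) {ℓ : ℝ≥0} {r : ℝ}
    (hGX : ∀ t ∈ Icc 0 τ, LipschitzOnWith ℓ (G t) (closedBall (X t) r))
    (hsmall : M * ‖Y₀ - X₀‖ * exp (M * ℓ * τ) < r) :
    ∀ t ∈ Icc 0 τ, ‖Y t - X t‖ ≤ M * ‖Y₀ - X₀‖ * exp (M * ℓ * τ) := by
  rcases lt_or_ge τ 0 with hτ0 | hτ0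
  · simp [Icc_eq_empty_of_lt hτ0]
  have hM := hU.nonneg (hτ0.trans hτ)
  have hgrowth : ∀ c ∈ Icc 0 τ,
      M * ‖Y₀ - X₀‖ * exp (M * ℓ * c) ≤ M * ‖Y₀ - X₀‖ * exp (M * ℓ * τ) := fun c hc => by
    gcongr; exact hc.2
  have hr : 0 ≤ r := (by positivity : 0 ≤ M * ‖Y₀ - X₀‖ * exp (M * ℓ * τ)).trans hsmall.le
  refine forall_le_of_bootstrap (hY.1.sub hX.1).norm hsmall ?_ fun c hc hnear => ?_
  · calc ‖Y 0 - X 0‖ = ‖U 0 0 (Y₀ - X₀)‖ := by rw [hY.apply_zero hτ0, hX.apply_zero hτ0, map_sub]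
      _ ≤ M * ‖Y₀ - X₀‖ := (U 0 0).le_of_opNorm_le (hU.norm_le 0 0 le_rfl le_rfl (hτ0.trans hτ)) _
      _ ≤ M * ‖Y₀ - X₀‖ * exp (M * ℓ * τ) := by simpa using hgrowth 0 ⟨le_rfl, hτ0⟩
      _ < r := hsmall
  refine le_trans ?_ (hgrowth c hc)
  refine (hY.mono hc.2).norm_sub_le (hX.mono hc.2) hU (hc.2.trans hτ)
    (hG.mono (prod_mono (Icc_subset_Icc_right hc.2) subset_rfl)) ℓ.coe_nonneg (fun s hs => ?_) c
    (right_mem_Icc.2 hc.1)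
  exact (hGX s ⟨hs.1, hs.2.trans hc.2⟩).norm_sub_le (mem_closedBall_iff_norm.2 (hnear s hs))
    (mem_closedBall_self hr)

theorem norm_sub_le_of_near (hY : IsMildSolution U G τ Y₀ Y) (hZ : IsMildSolution U G τ Z₀ Z)
    (hX : IsMildSolution U G τ X₀ X) (hU : IsBoundedStronglyContinuous U T M) (hτ : τ ≤ T)
    (hG : ContinuousOn (Function.uncurry G) (Icc 0 τ ×ˢ univ)) {ℓ : ℝ≥0} {r : ℝ}
    (hGX : ∀ t ∈ Icc 0 τ, LipschitzOnWith ℓ (G t) (closedBall (X t) r))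
    (hY₀ : M * ‖Y₀ - X₀‖ * exp (M * ℓ * τ) < r) (hZ₀ : M * ‖Z₀ - X₀‖ * exp (M * ℓ * τ) < r) :
    ∀ t ∈ Icc 0 τ, ‖Y t - Z t‖ ≤ M * exp (M * ℓ * τ) * ‖Y₀ - Z₀‖ := by
  intro t ht
  have hM := hU.nonneg (ht.1.trans ht.2 |>.trans hτ)
  have hnear : ∀ {W₀ W}, IsMildSolution U G τ W₀ W → M * ‖W₀ - X₀‖ * exp (M * ℓ * τ) < r →
      ∀ s ∈ Icc 0 τ, W s ∈ closedBall (X s) r := fun hW hW₀ s hs =>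
    mem_closedBall_iff_norm.2 ((hW.norm_sub_le_of_lipschitzOnWith hX hU hτ hG hGX hW₀ s hs).trans
      hW₀.le)
  calc ‖Y t - Z t‖ ≤ M * ‖Y₀ - Z₀‖ * exp (M * ℓ * t) :=
        hY.norm_sub_le hZ hU hτ hG ℓ.coe_nonneg (fun s hs =>
          (hGX s hs).norm_sub_le (hnear hY hY₀ s hs) (hnear hZ hZ₀ s hs)) t ht
    _ ≤ M * exp (M * ℓ * τ) * ‖Y₀ - Z₀‖ := by
        rw [mul_right_comm]; gcongr; exact ht.2

end IsMildSolution

end MildSolution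

section Existence

variable {𝕜 𝒳 : Type*} [NontriviallyNormedField 𝕜] [NormedAddCommGroup 𝒳] [NormedSpace 𝕜 𝒳]
  [NormedSpace ℝ 𝒳] [CompleteSpace 𝒳] {U : ℝ → ℝ → 𝒳 →L[𝕜] 𝒳} {G : ℝ → 𝒳 → 𝒳} {T M τ : ℝ}

theorem IsBoundedStronglyContinuous.exists_isMildSolution (hU : IsBoundedStronglyContinuous U T M)
    (hτ0 : 0 ≤ τ) (hτ : τ ≤ T) (hG : ContinuousOn (Function.uncurry G) (Icc 0 τ ×ˢ univ))
    {ℓ : ℝ≥0} (hGℓ : ∀ t ∈ Icc 0 τ, LipschitzWith ℓ (G t)) (Y₀ : 𝒳) :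
    ∃ Y, IsMildSolution U G τ Y₀ Y := by
  have hforcing : ∀ u : C(Icc (0:ℝ) τ, 𝒳),
      ContinuousOn (fun s => G s (IccExtend hτ0 u s)) (Icc 0 τ) := fun u =>
    hG.comp_graph u.continuous.Icc_extend'.continuousOn
  have hpicard : ∀ u : C(Icc (0:ℝ) τ, 𝒳), ContinuousOn
      (fun t => U t 0 Y₀ + ∫ s in (0:ℝ)..t, U t s (G s (IccExtend hτ0 u s))) (Icc 0 τ) := fun u =>
    ((hU.continuousOn_apply Y₀).comp (continuousOn_id.prodMk continuousOn_const)
      fun t ht => ⟨le_rfl, ht.1, ht.2.trans hτ⟩).add (hU.continuousOn_integral hτ (hforcing u))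
  obtain ⟨u, hu⟩ := exists_isFixedPt_of_norm_sub_le_integral hτ0
    (mul_nonneg (hU.nonneg (hτ0.trans hτ)) ℓ.coe_nonneg)
    (Φ := fun u => ⟨_, (hpicard u).domRestrict⟩) fun u v t => by
      have hsub : Icc 0 (t : ℝ) ⊆ Icc 0 τ := Icc_subset_Icc_right t.2.2
      simp only [ContinuousMap.coe_mk, domRestrict_apply, add_sub_add_left_eq_sub]
      rw [mul_assoc, ← intervalIntegral.integral_const_mul]
      exact hU.norm_integral_sub_le t.2.1 (t.2.2.trans hτ) ((hforcing u).mono hsub)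
        ((hforcing v).mono hsub) (Continuous.intervalIntegrable (by fun_prop) _ _)
        fun s hs => (hGℓ s (hsub hs)).norm_sub_le _ _
  exact ⟨IccExtend hτ0 u, u.continuous.Icc_extend'.continuousOn, fun t ht =>
    (IccExtend_of_mem hτ0 u ht).trans (DFunLike.congr_fun hu.symm ⟨t, ht⟩)⟩

theorem IsMildSolution.exists_of_lipschitzOnWith {X₀ : 𝒳} {X : ℝ → 𝒳}
    (hX : IsMildSolution U G τ X₀ X) (hU : IsBoundedStronglyContinuous U T M) (hτ0 : 0 ≤ τ)
    (hτ : τ ≤ T) (hG : ContinuousOn (Function.uncurry G) (Icc 0 τ ×ˢ univ)) {ℓ : ℝ≥0} {r : ℝ}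
    (hGX : ∀ t ∈ Icc 0 τ, LipschitzOnWith ℓ (G t) (closedBall (X t) r)) {Y₀ : 𝒳}
    (hsmall : M * ‖Y₀ - X₀‖ * exp (M * ℓ * τ) < r) :
    ∃ Y, IsMildSolution U G τ Y₀ Y := by
  have hM := hU.nonneg (hτ0.trans hτ)
  have hr : 0 ≤ r := (by positivity : 0 ≤ M * ‖Y₀ - X₀‖ * exp (M * ℓ * τ)).trans hsmall.le
  set proj : ℝ → 𝒳 → 𝒳 := fun t x => X t + radialRetraction r (x - X t)
  have hproj_mem : ∀ t x, proj t x ∈ closedBall (X t) r := fun t x => by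
    simpa [proj, dist_eq_norm] using norm_radialRetraction_le hr (x - X t)
  have hproj_eq : ∀ t, ∀ x ∈ closedBall (X t) r, proj t x = x := fun t x hx => by
    simp [proj, radialRetraction_of_norm_le (mem_closedBall_iff_norm.1 hx)]
  have hproj_lip : ∀ t, LipschitzWith 2 (proj t) := fun t =>
    LipschitzWith.of_dist_le_mul fun x y => by
      simpa [proj, dist_add_left, dist_sub_right] using
        (lipschitzWith_radialRetraction hr).dist_le_mul (x - X t) (y - X t)
  set G' : ℝ → 𝒳 → 𝒳 := fun t x => G t (proj t x)
  have hXcont : ContinuousOn (fun p : ℝ × 𝒳 => X p.1) (Icc 0 τ ×ˢ univ) :=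
    hX.1.comp continuousOn_fst mapsTo_fst_prod
  have hG' : ContinuousOn (Function.uncurry G') (Icc 0 τ ×ˢ univ) :=
    hG.comp (continuousOn_fst.prodMk (hXcont.add ((lipschitzWith_radialRetraction hr).continuous
      |>.comp_continuousOn (continuousOn_snd.sub hXcont)))) fun p hp => ⟨hp.1, trivial⟩
  have hG'ℓ : ∀ t ∈ Icc 0 τ, LipschitzWith (ℓ * 2) (G' t) := fun t ht =>
    lipschitzOnWith_univ.1 ((hGX t ht).comp (hproj_lip t).lipschitzOnWith fun x _ => hproj_mem t x)
  have hG'X : ∀ t ∈ Icc 0 τ, LipschitzOnWith ℓ (G' t) (closedBall (X t) r) := fun t ht =>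
    LipschitzOnWith.of_dist_le_mul fun x hx y hy => by
      simpa [G', hproj_eq t x hx, hproj_eq t y hy] using (hGX t ht).dist_le_mul x hx y hy
  have hXG' : IsMildSolution U G' τ X₀ X :=
    hX.congr fun t _ => by simp [G', hproj_eq t (X t) (mem_closedBall_self hr)]
  obtain ⟨Y, hY⟩ := hU.exists_isMildSolution hτ0 hτ hG' hG'ℓ Y₀
  have hYX := hY.norm_sub_le_of_lipschitzOnWith hXG' hU hτ hG' hG'X hsmall
  exact ⟨Y, hY.congr fun t ht => by
    simp [G', hproj_eq t (Y t) (mem_closedBall_iff_norm.2 ((hYX t ht).trans hsmall.le))]⟩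

end Existence

theorem mild_solution_lipschitz_dependence_general {𝒳 : Type*} [NormedAddCommGroup 𝒳]
    [NormedSpace ℂ 𝒳] [CompleteSpace 𝒳]
    (T : ℝ)
    (U : ℝ → ℝ → 𝒳 →L[ℂ] 𝒳)
    (hUcont : ∀ x : 𝒳, ContinuousOn (fun p : ℝ × ℝ => U p.1 p.2 x)
      {p : ℝ × ℝ | 0 ≤ p.2 ∧ p.2 ≤ p.1 ∧ p.1 ≤ T})
    (M₀ : ℝ) (hM₀ : ∀ s t : ℝ, 0 ≤ s → s ≤ t → t ≤ T → ‖U t s‖ ≤ M₀)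
    (F : ℝ → 𝒳 → 𝒳)
    (hF : ContinuousOn (fun p : ℝ × 𝒳 => F p.1 p.2) (Set.Icc 0 T ×ˢ Set.univ))
    (L : ℝ → ℝ → ℝ)
    (hL0 : ∀ τ ρ : ℝ, 0 < τ → τ ≤ T → 0 < ρ → 0 ≤ L τ ρ)
    (hLip : ∀ τ ρ : ℝ, 0 < τ → τ ≤ T → 0 < ρ → ∀ t ∈ Set.Icc (0:ℝ) τ, ∀ x y : 𝒳,
      ‖x‖ ≤ ρ → ‖y‖ ≤ ρ → ‖F t x - F t y‖ ≤ L τ ρ * ‖x - y‖)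
    (X₀ : 𝒳) (tp : ℝ) (htpT : tp ≤ T)
    (I : Set ℝ) (hI : (I = Set.Icc 0 T ∧ tp = T) ∨ I = Set.Ico 0 tp)
    (X : ℝ → 𝒳) (hXc : ContinuousOn X I)
    (hX : ∀ t ∈ I, X t = U t 0 X₀ + ∫ s in (0:ℝ)..t, U t s (F s (X s))) :
    ∀ tstar : ℝ, 0 < tstar → tstar < tp →
      ∃ ρstar : ℝ, 0 < ρstar ∧ ∃ K : ℝ, 0 ≤ K ∧
        (∀ Y₀ ∈ Metric.closedBall X₀ ρstar,
          ∃ Y : ℝ → 𝒳, ContinuousOn Y (Set.Icc 0 tstar) ∧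
            ∀ t ∈ Set.Icc (0:ℝ) tstar,
              Y t = U t 0 Y₀ + ∫ s in (0:ℝ)..t, U t s (F s (Y s))) ∧
        ∀ Y₀ Z₀ : 𝒳, Y₀ ∈ Metric.closedBall X₀ ρstar → Z₀ ∈ Metric.closedBall X₀ ρstar →
          ∀ Y Z : ℝ → 𝒳,
            ContinuousOn Y (Set.Icc 0 tstar) →
            (∀ t ∈ Set.Icc (0:ℝ) tstar,
              Y t = U t 0 Y₀ + ∫ s in (0:ℝ)..t, U t s (F s (Y s))) →
            ContinuousOn Z (Set.Icc 0 tstar) →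
            (∀ t ∈ Set.Icc (0:ℝ) tstar,
              Z t = U t 0 Z₀ + ∫ s in (0:ℝ)..t, U t s (F s (Z s))) →
            ∀ t ∈ Set.Icc (0:ℝ) tstar, ‖Y t - Z t‖ ≤ K * ‖Y₀ - Z₀‖ := by
  intro tstar hts htstp
  have htsT : tstar ≤ T := htstp.le.trans htpT
  have hsub : Icc 0 tstar ⊆ I := by
    rcases hI with ⟨rfl, -⟩ | rfl
    exacts [Icc_subset_Icc_right htsT, fun s hs => ⟨hs.1, hs.2.trans_lt htstp⟩]
  have hU : IsBoundedStronglyContinuous U T M₀ := ⟨hUcont, hM₀⟩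
  have hXs : IsMildSolution U F tstar X₀ X := ⟨hXc.mono hsub, fun t ht => hX t (hsub ht)⟩
  have hFs : ContinuousOn (Function.uncurry F) (Icc 0 tstar ×ˢ univ) :=
    hF.mono (prod_mono (Icc_subset_Icc_right htsT) subset_rfl)
  obtain ⟨R, hR⟩ := isCompact_Icc.exists_bound_of_continuousOn hXs.1
  have hR1 : 0 < R + 1 := by linarith [(norm_nonneg _).trans (hR 0 ⟨le_rfl, hts.le⟩)]
  set ℓ : ℝ≥0 := ⟨L tstar (R + 1), hL0 _ _ hts htsT hR1⟩
  have hFX : ∀ t ∈ Icc 0 tstar, LipschitzOnWith ℓ (F t) (closedBall (X t) 1) := fun t ht =>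
    LipschitzOnWith.of_dist_le_mul fun x hx y hy => by
      rw [dist_eq_norm, dist_eq_norm]
      exact hLip _ _ hts htsT hR1 t ht x y
        (by linarith [norm_le_of_mem_closedBall hx, hR t ht])
        (by linarith [norm_le_of_mem_closedBall hy, hR t ht])
  set K := M₀ * exp (M₀ * ℓ * tstar)
  have hK : 0 ≤ K := mul_nonneg (hU.nonneg (hts.le.trans htsT)) (exp_pos _).le
  have hsmall : ∀ Y₀ ∈ closedBall X₀ (1 / (K + 1)), M₀ * ‖Y₀ - X₀‖ * exp (M₀ * ℓ * tstar) < 1 :=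
    fun Y₀ hY₀ => by
      rw [mul_right_comm]
      calc K * ‖Y₀ - X₀‖ ≤ K * (1 / (K + 1)) := by gcongr; exact mem_closedBall_iff_norm.1 hY₀
        _ < 1 := by rw [mul_one_div, div_lt_one (by positivity)]; linarith
  refine ⟨1 / (K + 1), by positivity, K, hK, fun Y₀ hY₀ => ?_,
    fun Y₀ Z₀ hY₀ hZ₀ Y Z hYc hYe hZc hZe => ?_⟩
  · exact hXs.exists_of_lipschitzOnWith hU hts.le htsT hFs hFX (hsmall Y₀ hY₀)
  · exact IsMildSolution.norm_sub_le_of_near ⟨hYc, hYe⟩ ⟨hZc, hZe⟩ hXs hU htsT hFs hFX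
      (hsmall Y₀ hY₀) (hsmall Z₀ hZ₀)

/-- Lipschitz continuous dependence on the initial datum: if `X` is the maximal mild
solution with initial datum `X₀`, defined on `[0,T]` or on `[0, t⁺(X₀))`, then for every
`t* ∈ (0, t⁺(X₀))` there is a radius `ρ* > 0` such that every initial datum in the
closed ball of radius `ρ*` around `X₀` admits a mild solution on `[0, t*]`, and the
solution map is Lipschitz continuous in the supremum norm. -/
theorem mild_solution_lipschitz_dependence {𝒳 : Type*} [NormedAddCommGroup 𝒳]
    [NormedSpace ℂ 𝒳] [CompleteSpace 𝒳]
    (T : ℝ) (hT : 0 < T)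
    (U : ℝ → ℝ → 𝒳 →L[ℂ] 𝒳)
    (hUcomp : ∀ s r t : ℝ, 0 ≤ s → s ≤ r → r ≤ t → t ≤ T →
      (U t r).comp (U r s) = U t s)
    (hUid : ∀ s : ℝ, 0 ≤ s → s ≤ T → U s s = ContinuousLinearMap.id ℂ 𝒳)
    (hUcont : ∀ x : 𝒳, ContinuousOn (fun p : ℝ × ℝ => U p.1 p.2 x)
      {p : ℝ × ℝ | 0 ≤ p.2 ∧ p.2 ≤ p.1 ∧ p.1 ≤ T})
    (M₀ : ℝ) (hM₀ : ∀ s t : ℝ, 0 ≤ s → s ≤ t → t ≤ T → ‖U t s‖ ≤ M₀)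
    (F : ℝ → 𝒳 → 𝒳)
    (hF : ContinuousOn (fun p : ℝ × 𝒳 => F p.1 p.2) (Set.Icc 0 T ×ˢ Set.univ))
    (hF0 : ∀ t ∈ Set.Icc (0:ℝ) T, F t 0 = 0)
    (L : ℝ → ℝ → ℝ)
    (hL0 : ∀ τ ρ : ℝ, 0 < τ → τ ≤ T → 0 < ρ → 0 ≤ L τ ρ)
    (hLmono : ∀ τ₁ τ₂ ρ₁ ρ₂ : ℝ, 0 < τ₁ → τ₁ ≤ τ₂ → τ₂ ≤ T → 0 < ρ₁ → ρ₁ ≤ ρ₂ →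
      L τ₁ ρ₁ ≤ L τ₂ ρ₂)
    (hLip : ∀ τ ρ : ℝ, 0 < τ → τ ≤ T → 0 < ρ → ∀ t ∈ Set.Icc (0:ℝ) τ, ∀ x y : 𝒳,
      ‖x‖ ≤ ρ → ‖y‖ ≤ ρ → ‖F t x - F t y‖ ≤ L τ ρ * ‖x - y‖)
    (X₀ : 𝒳) (tp : ℝ) (htp0 : 0 < tp) (htpT : tp ≤ T)
    (I : Set ℝ) (hI : (I = Set.Icc 0 T ∧ tp = T) ∨ I = Set.Ico 0 tp)
    (X : ℝ → 𝒳) (hXc : ContinuousOn X I)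
    (hX : ∀ t ∈ I, X t = U t 0 X₀ + ∫ s in (0:ℝ)..t, U t s (F s (X s))) :
    ∀ tstar : ℝ, 0 < tstar → tstar < tp →
      ∃ ρstar : ℝ, 0 < ρstar ∧ ∃ K : ℝ, 0 ≤ K ∧
        (∀ Y₀ ∈ Metric.closedBall X₀ ρstar,
          ∃ Y : ℝ → 𝒳, ContinuousOn Y (Set.Icc 0 tstar) ∧
            ∀ t ∈ Set.Icc (0:ℝ) tstar,
              Y t = U t 0 Y₀ + ∫ s in (0:ℝ)..t, U t s (F s (Y s))) ∧
        ∀ Y₀ Z₀ : 𝒳, Y₀ ∈ Metric.closedBall X₀ ρstar → Z₀ ∈ Metric.closedBall X₀ ρstar →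
          ∀ Y Z : ℝ → 𝒳,
            ContinuousOn Y (Set.Icc 0 tstar) →
            (∀ t ∈ Set.Icc (0:ℝ) tstar,
              Y t = U t 0 Y₀ + ∫ s in (0:ℝ)..t, U t s (F s (Y s))) →
            ContinuousOn Z (Set.Icc 0 tstar) →
            (∀ t ∈ Set.Icc (0:ℝ) tstar,
              Z t = U t 0 Z₀ + ∫ s in (0:ℝ)..t, U t s (F s (Z s))) →
            ∀ t ∈ Set.Icc (0:ℝ) tstar, ‖Y t - Z t‖ ≤ K * ‖Y₀ - Z₀‖ :=
  mild_solution_lipschitz_dependence_general T U hUcont M₀ hM₀ F hF L hL0 hLip X₀ tp htpT I hI X hXc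
    hX
end
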